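/- arXiv:2501.01914 — 8 statements merged into one kernel-verified Lean document; each statement's English description precedes it below -/
import Mathlib

section
/- Let S ⊆ ℝ² be a measurable set which is unbounded and has positive Lebesgue measure. Then S contains the three vertices of an isosceles triangle of area 1; that is, there exist points a, b, c ∈ S such that dist(a,b) = dist(a,c), the points are not collinear, and (1/2)·|det(b − a, c − a)| = 1. -/
/-!
Pick a compact `K ⊆ S` of positive measure and `ε > 0` with `vol (cthickening ε K) < 2 vol K`,
then a point `a ∈ S` very far from `K`. Rotating each `z` about `a` by the angle `θ` with
`sin θ = 2 / |z - a|²` turns the segment `[a, z]` into an isosceles triangle of area `1`. This map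
is a shear in polar coordinates about `a`, hence area-preserving, and since `a` is far it moves the
points of `K` by less than `ε`. So `K` and its image cannot be disjoint: some `b ∈ K` is mapped
into `K`, and `a`, `b` and its image are the required vertices.
-/

open MeasureTheory Metric

/-- `det(u,v) = u₁v₂ − u₂v₁` for vectors in the Euclidean plane. -/
def det2 (u v : EuclideanSpace ℝ (Fin 2)) : ℝ := u 0 * v 1 - u 1 * v 0

open Complex ComplexConjugate Bornology Filter Topology
open scoped Real

theorem exists_isCompact_measure_cthickening_lt_two_mul {α : Type*} [MetricSpace α]
    [ProperSpace α] [MeasurableSpace α] [OpensMeasurableSpace α] {μ : Measure α}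
    [μ.InnerRegular] [IsFiniteMeasureOnCompacts μ] {S : Set α} (hS : MeasurableSet S)
    (hpos : 0 < μ S) :
    ∃ K ⊆ S, IsCompact K ∧ ∃ ε > 0, μ (cthickening ε K) < 2 * μ K := by
  obtain ⟨K, hKS, hK, hKpos⟩ := hS.exists_lt_isCompact hpos
  have hlt : μ K < 2 * μ K := by
    rw [two_mul]
    exact ENNReal.lt_add_right hK.measure_lt_top.ne hKpos.ne'
  obtain ⟨ε, hε, hεpos⟩ := (((tendsto_measure_cthickening_of_isCompact hK).eventually
    (gt_mem_nhds hlt)).filter_mono nhdsWithin_le_nhds |>.and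
      (self_mem_nhdsWithin (s := Set.Ioi 0))).exists
  exact ⟨K, hKS, hK, ε, hεpos, hε⟩

theorem exists_mem_forall_lt_dist_of_not_isBounded {α : Type*} [PseudoMetricSpace α]
    {S K : Set α} (hS : ¬ IsBounded S) (hK : IsBounded K) (R : ℝ) :
    ∃ a ∈ S, ∀ z ∈ K, R < dist z a := by
  obtain ⟨a, haS, ha⟩ := Set.not_subset.mp fun h => hS (hK.cthickening (δ := R) |>.subset h)
  refine ⟨a, haS, fun z hz => lt_of_not_ge fun hle => ha ?_⟩
  exact mem_cthickening_of_dist_le a z R K hz (by rwa [dist_comm])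

theorem exists_mem_map_mem_of_measure_cthickening_lt {α : Type*} [PseudoMetricSpace α]
    [MeasurableSpace α] {μ : Measure α} {T : α → α} {K : Set α} {ε : ℝ} (hK : MeasurableSet K)
    (hT : ∀ z ∈ K, dist (T z) z ≤ ε) (hvol : μ (T '' K) = μ K)
    (hμ : μ (cthickening ε K) < 2 * μ K) :
    ∃ z ∈ K, T z ∈ K := by
  have himage : T '' K ⊆ cthickening ε K := by
    rintro _ ⟨z, hz, rfl⟩
    exact mem_cthickening_of_dist_le _ z ε K hz (hT z hz)
  obtain ⟨_, ⟨z, hz, rfl⟩, hTz⟩ := nonempty_inter_of_measure_lt_add μ hK himage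
    (self_subset_cthickening K) (hμ.trans_eq (by rw [two_mul, hvol]))
  exact ⟨z, hz, hTz⟩

theorem addHaar_image_eq_of_abs_det_fderiv_eq_one {E : Type*} [NormedAddCommGroup E]
    [NormedSpace ℝ E] [FiniteDimensional ℝ E] [MeasurableSpace E] [BorelSpace E]
    (μ : Measure E) [μ.IsAddHaarMeasure] {f : E → E} {s : Set E} (hs : MeasurableSet s)
    (hf : ∀ x ∈ s, DifferentiableAt ℝ f x) (hdet : ∀ x ∈ s, |(fderiv ℝ f x).det| = 1)
    (hinj : Set.InjOn f s) :
    μ (f '' s) = μ s := by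
  rw [← lintegral_abs_det_fderiv_eq_addHaar_image μ hs
    (fun x hx => (hf x hx).hasFDerivAt.hasFDerivWithinAt) hinj,
    setLIntegral_congr_fun hs fun x hx => by rw [hdet x hx, ENNReal.ofReal_one],
    setLIntegral_one]

theorem Real.arcsin_le_pi_div_two_mul {x : ℝ} (h₀ : 0 ≤ x) (h₁ : x ≤ 1) :
    Real.arcsin x ≤ π / 2 * x := by
  have := Real.mul_le_sin (Real.arcsin_nonneg.mpr h₀) (Real.arcsin_le_pi_div_two x)
  rw [Real.sin_arcsin (by linarith) h₁] at this
  calc Real.arcsin x = π / 2 * (2 / π * Real.arcsin x) := by field_simp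
    _ ≤ π / 2 * x := by gcongr

theorem two_div_sq_lt_one {r : ℝ} (h : 2 ≤ r) : 2 / r ^ 2 < 1 :=
  (div_lt_one (by positivity)).mpr (by nlinarith)

/-- The rotation of `z` about `a` by the angle `g (‖z - a‖ ^ 2)`. In polar coordinates about `a`
it is the shear `(r, φ) ↦ (r, φ + g (r ^ 2))`. -/
noncomputable def radialTwist (g : ℝ → ℝ) (a z : ℂ) : ℂ := a + (z - a) * exp (g (‖z - a‖ ^ 2) * I)

section radialTwist

variable {g : ℝ → ℝ} {a z : ℂ}

theorem radialTwist_sub : radialTwist g a z - a = (z - a) * exp (g (‖z - a‖ ^ 2) * I) :=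
  add_sub_cancel_left a _

theorem norm_radialTwist_sub : ‖radialTwist g a z - a‖ = ‖z - a‖ := by
  rw [radialTwist_sub, norm_mul, norm_exp_ofReal_mul_I, mul_one]

theorem radialTwist_injective : Function.Injective (radialTwist g a) := by
  intro z w h
  have hnorm : ‖z - a‖ = ‖w - a‖ := by
    rw [← norm_radialTwist_sub (g := g), h, norm_radialTwist_sub]
  have := congrArg (· - a) h
  simp only [radialTwist_sub, hnorm] at this
  exact sub_left_injective (mul_right_cancel₀ (exp_ne_zero _) this)

theorem dist_radialTwist_le : dist (radialTwist g a z) z ≤ ‖z - a‖ * |g (‖z - a‖ ^ 2)| := by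
  have : radialTwist g a z - z = (z - a) * (exp (I * g (‖z - a‖ ^ 2)) - 1) := by
    rw [radialTwist, mul_comm I]; ring
  rw [dist_eq, this, norm_mul]
  exact mul_le_mul_of_nonneg_left Real.norm_exp_I_mul_ofReal_sub_one_le (norm_nonneg _)

theorem im_conj_mul_radialTwist_sub :
    (conj (z - a) * (radialTwist g a z - a)).im = ‖z - a‖ ^ 2 * Real.sin (g (‖z - a‖ ^ 2)) := by
  rw [radialTwist_sub, ← mul_assoc, conj_mul', ← ofReal_pow, im_ofReal_mul, exp_ofReal_mul_I_im]

theorem hasFDerivAt_radialTwist {g' : ℝ} (hg : HasDerivAt g g' (‖z - a‖ ^ 2)) :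
    HasFDerivAt (radialTwist g a)
      ((z - a) • exp (g (‖z - a‖ ^ 2) * I) • ((g' • 2 • innerSL ℝ (z - a)).smulRight I) +
        exp (g (‖z - a‖ ^ 2) * I) • ContinuousLinearMap.id ℝ ℂ) z := by
  have hsub : HasFDerivAt (fun y : ℂ => y - a) (ContinuousLinearMap.id ℝ ℂ) z :=
    (hasFDerivAt_id z).sub_const a
  have hangle := (hg.comp_hasFDerivAt z hsub.norm_sq).smul_const I
  simp only [real_smul] at hangle
  exact (hsub.mul hangle.cexp).const_add a

theorem det_fderiv_radialTwist (hg : DifferentiableAt ℝ g (‖z - a‖ ^ 2)) :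
    (fderiv ℝ (radialTwist g a) z).det = 1 := by
  rw [(hasFDerivAt_radialTwist hg.hasDerivAt).fderiv, ContinuousLinearMap.det,
    ← LinearMap.det_toMatrix basisOneI, Matrix.det_fin_two]
  simp only [LinearMap.toMatrix_apply, coe_basisOneI, coe_basisOneI_repr, Matrix.cons_val_zero,
    Matrix.cons_val_one, ContinuousLinearMap.toLinearMap_add, ContinuousLinearMap.toLinearMap_smul,
    ContinuousLinearMap.coe_smulRight, ContinuousLinearMap.coe_id, LinearMap.add_apply,
    LinearMap.smul_apply, LinearMap.smulRight_apply, LinearMap.id_apply,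
    ContinuousLinearMap.coe_coe, innerSL_apply_apply, Complex.inner, smul_eq_mul, real_smul,
    add_re, add_im, mul_re, mul_im, exp_ofReal_mul_I_re, exp_ofReal_mul_I_im, I_re, I_im, one_re,
    conj_re, conj_im, ofReal_re, ofReal_im]
  linear_combination Real.sin_sq_add_cos_sq (g (‖z - a‖ ^ 2))

theorem volume_image_radialTwist {A : Set ℂ} (hA : MeasurableSet A)
    (hg : ∀ z ∈ A, DifferentiableAt ℝ g (‖z - a‖ ^ 2)) :
    volume (radialTwist g a '' A) = volume A :=
  addHaar_image_eq_of_abs_det_fderiv_eq_one volume hA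
    (fun z hz => (hasFDerivAt_radialTwist (hg z hz).hasDerivAt).differentiableAt)
    (fun z hz => by rw [det_fderiv_radialTwist (hg z hz), abs_one]) radialTwist_injective.injOn

end radialTwist

/-- The angle `arcsin (2 / ‖z - a‖ ^ 2)` makes `a, z, areaTwist a z` a triangle of area `1`,
as soon as `2 ≤ ‖z - a‖ ^ 2`. -/
noncomputable def areaTwist (a : ℂ) : ℂ → ℂ := radialTwist (fun s => Real.arcsin (2 / s)) a

section areaTwist

variable {a z : ℂ}

theorem norm_areaTwist_sub : ‖areaTwist a z - a‖ = ‖z - a‖ := norm_radialTwist_sub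

theorem im_conj_mul_areaTwist_sub (h : 2 ≤ ‖z - a‖) :
    (conj (z - a) * (areaTwist a z - a)).im = 2 := by
  have h₀ : 0 ≤ 2 / ‖z - a‖ ^ 2 := by positivity
  rw [areaTwist, im_conj_mul_radialTwist_sub,
    Real.sin_arcsin (by linarith) (two_div_sq_lt_one h).le]
  field_simp

theorem dist_areaTwist_le (h : 2 ≤ ‖z - a‖) : dist (areaTwist a z) z ≤ π / ‖z - a‖ := by
  have h₀ : 0 ≤ 2 / ‖z - a‖ ^ 2 := by positivity
  calc dist (areaTwist a z) z ≤ ‖z - a‖ * |Real.arcsin (2 / ‖z - a‖ ^ 2)| := dist_radialTwist_le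
    _ ≤ ‖z - a‖ * (π / 2 * (2 / ‖z - a‖ ^ 2)) := by
      rw [abs_of_nonneg (Real.arcsin_nonneg.mpr h₀)]
      gcongr
      exact Real.arcsin_le_pi_div_two_mul h₀ (two_div_sq_lt_one h).le
    _ = π / ‖z - a‖ := by field_simp

theorem volume_image_areaTwist {A : Set ℂ} (hA : MeasurableSet A) (h : ∀ z ∈ A, 2 ≤ ‖z - a‖) :
    volume (areaTwist a '' A) = volume A := by
  refine volume_image_radialTwist hA fun z hz => ?_
  have hpos : 0 < ‖z - a‖ := by linarith [h z hz]
  have h₀ : 0 ≤ 2 / ‖z - a‖ ^ 2 := by positivity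
  exact (Real.differentiableAt_arcsin.mpr ⟨by linarith, (two_div_sq_lt_one (h z hz)).ne⟩).comp _
    ((differentiableAt_const _).div differentiableAt_id (by positivity))

end areaTwist

theorem exists_isosceles_im_conj_mul_eq_two {S : Set ℂ} (hmeas : MeasurableSet S)
    (hunb : ¬ IsBounded S) (hpos : 0 < volume S) :
    ∃ a ∈ S, ∃ b ∈ S, ∃ c ∈ S, dist a b = dist a c ∧ (conj (b - a) * (c - a)).im = 2 := by
  obtain ⟨K, hKS, hK, ε, hε, hμ⟩ := exists_isCompact_measure_cthickening_lt_two_mul hmeas hpos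
  obtain ⟨a, haS, hgt⟩ :=
    exists_mem_forall_lt_dist_of_not_isBounded hunb hK.isBounded (max 2 (π / ε))
  have hfar : ∀ z ∈ K, 2 ≤ ‖z - a‖ ∧ π / ε ≤ ‖z - a‖ := fun z hz => by
    obtain ⟨h₂, hπ⟩ := max_lt_iff.mp (dist_eq z a ▸ hgt z hz)
    exact ⟨h₂.le, hπ.le⟩
  have hmove : ∀ z ∈ K, dist (areaTwist a z) z ≤ ε := fun z hz =>
    (dist_areaTwist_le (hfar z hz).1).trans <|
      (div_le_comm₀ (by linarith [(hfar z hz).1]) hε).mpr (hfar z hz).2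
  obtain ⟨b, hbK, hcK⟩ := exists_mem_map_mem_of_measure_cthickening_lt hK.measurableSet hmove
    (volume_image_areaTwist hK.measurableSet fun z hz => (hfar z hz).1) hμ
  refine ⟨a, haS, b, hKS hbK, areaTwist a b, hKS hcK, ?_,
    im_conj_mul_areaTwist_sub (hfar b hbK).1⟩
  rw [dist_comm a, dist_comm a, dist_eq, dist_eq, norm_areaTwist_sub]

theorem det2_eq_zero_of_collinear {a b c : EuclideanSpace ℝ (Fin 2)}
    (h : Collinear ℝ ({a, b, c} : Set (EuclideanSpace ℝ (Fin 2)))) :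
    det2 (b - a) (c - a) = 0 := by
  obtain ⟨v, hv⟩ := (collinear_iff_of_mem (Set.mem_insert a {b, c})).mp h
  obtain ⟨t, rfl⟩ := hv b (by simp)
  obtain ⟨s, rfl⟩ := hv c (by simp)
  simp only [det2, vadd_eq_add, add_sub_cancel_right, PiLp.smul_apply, smul_eq_mul]
  ring

theorem det2_orthonormalBasisOneI_repr (u v : ℂ) :
    det2 (orthonormalBasisOneI.repr u) (orthonormalBasisOneI.repr v) = (conj u * v).im := by
  simp [det2]
  ring

/-- Every unbounded measurable subset of the plane of positive Lebesgue measure contains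
the three vertices of an isosceles triangle of area 1. -/
theorem isosceles_triangle_of_unbounded_pos_measure
    (S : Set (EuclideanSpace ℝ (Fin 2))) (hmeas : MeasurableSet S)
    (hunb : ¬ Bornology.IsBounded S) (hpos : 0 < volume S) :
    ∃ a b c : EuclideanSpace ℝ (Fin 2), a ∈ S ∧ b ∈ S ∧ c ∈ S ∧
      dist a b = dist a c ∧
      ¬ Collinear ℝ ({a, b, c} : Set (EuclideanSpace ℝ (Fin 2))) ∧
      (1 / 2) * |det2 (b - a) (c - a)| = 1 := by
  set e := orthonormalBasisOneI.repr
  have hunb' : ¬ IsBounded (e ⁻¹' S) := fun hb => hunb <| by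
    simpa [Set.image_preimage_eq _ e.surjective] using e.lipschitz.isBounded_image hb
  have hpos' : 0 < volume (e ⁻¹' S) := by
    rwa [orthonormalBasisOneI.measurePreserving_repr.measure_preimage hmeas.nullMeasurableSet]
  obtain ⟨a, ha, b, hb, c, hc, hdist, harea⟩ :=
    exists_isosceles_im_conj_mul_eq_two (hmeas.preimage e.continuous.measurable) hunb' hpos'
  have hdet : det2 (e b - e a) (e c - e a) = 2 := by
    rw [← map_sub, ← map_sub, det2_orthonormalBasisOneI_repr, harea]
  refine ⟨e a, e b, e c, ha, hb, hc, by rwa [e.dist_map, e.dist_map], fun hcol => ?_, ?_⟩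
  · simpa [hdet] using det2_eq_zero_of_collinear hcol
  · rw [hdet]; norm_num
end

section
/- Let S ⊆ ℝ² be a measurable set which is unbounded and has positive Lebesgue measure. Then S contains the three vertices of a right-angled triangle of area 1; that is, there exist points a, b, c ∈ S such that the inner product ⟨b − a, c − a⟩ = 0, the points are not collinear, and (1/2)·|det(b − a, c − a)| = 1. -/
open MeasureTheory Metric RealInnerProductSpace

/-!
Take a point `x ∈ S` at which `S` has density one and a point `q ∈ S` far away from `x`. For `a`
near `x`, the point `c(a) = a + (2 / ‖q - a‖²) • J (q - a)`, with `J` the rotation by `π / 2`,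
makes `a, q, c(a)` a right triangle at `a` of area `1`. As `q` is far, `c` moves points by little
and is Lipschitz-close to the identity (its displacement is, up to translation and scaling, `J`
applied to the inversion about `q`), so it shrinks measure by at most a factor `2`. On a small ball around `x` almost all of the
ball lies in `S`, so the image of `S` under `c` must meet `S`.
-/

open Filter Set Module EuclideanGeometry
open scoped NNReal ENNReal Topology

theorem exists_mem_inter_apply_mem_of_measure_lt {α : Type*} [MeasurableSpace α] (μ : Measure α)
    {S s t : Set α} {f : α → α} {c : ℝ≥0} (hst : s ⊆ t) (hf : MapsTo f s t)
    (hc : c * μ (s ∩ S) ≤ μ (f '' (s ∩ S))) (hlt : (1 + c) * μ (t \ S) < c * μ s) :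
    ∃ a ∈ s ∩ S, f a ∈ S := by
  by_contra! h
  have himage : f '' (s ∩ S) ⊆ t \ S := by
    rintro _ ⟨a, ha, rfl⟩
    exact ⟨hf ha.1, h a ha⟩
  refine hlt.not_ge ?_
  calc c * μ s ≤ c * (μ (s ∩ S) + μ (t \ S)) := by
        gcongr
        exact (measure_le_inter_add_sdiff μ s S).trans (by gcongr)
    _ ≤ μ (t \ S) + c * μ (t \ S) := by
        rw [mul_add]
        gcongr
        exact hc.trans (measure_mono himage)
    _ = (1 + c) * μ (t \ S) := by ring

theorem exists_mem_tendsto_measure_compl_inter_closedBall_div {β : Type*} [MetricSpace β]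
    [MeasurableSpace β] [BorelSpace β] [SecondCountableTopology β] [HasBesicovitchCovering β]
    (μ : Measure β) [IsLocallyFiniteMeasure μ] {S : Set β} (hS : MeasurableSet S)
    (hμS : μ S ≠ 0) :
    ∃ x ∈ S, Tendsto (fun r => μ (Sᶜ ∩ closedBall x r) / μ (closedBall x r)) (𝓝[>] 0) (𝓝 0) := by
  obtain ⟨x, hxS, hx⟩ := Measure.exists_mem_of_measure_ne_zero_of_ae hμS
    (ae_restrict_of_ae (Besicovitch.ae_tendsto_measure_inter_div_of_measurableSet μ hS.compl))
  rw [indicator_of_notMem (notMem_compl_iff.2 hxS)] at hx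
  exact ⟨x, hxS, hx⟩

section AddHaar

variable {E : Type*} [NormedAddCommGroup E] [NormedSpace ℝ E] [FiniteDimensional ℝ E]
  [MeasurableSpace E] [BorelSpace E] (μ : Measure E) [μ.IsAddHaarMeasure]

theorem eventually_mul_measure_closedBall_two_mul_diff_lt {S : Set E} {x : E}
    (hx : Tendsto (fun r => μ (Sᶜ ∩ closedBall x r) / μ (closedBall x r)) (𝓝[>] 0) (𝓝 0))
    {C c : ℝ≥0∞} (hC : C ≠ ⊤) (hc : c ≠ 0) :
    ∀ᶠ r in 𝓝[>] 0, C * μ (closedBall x (2 * r) \ S) < c * μ (closedBall x r) := by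
  set K : ℝ≥0∞ := ENNReal.ofReal (2 ^ finrank ℝ E)
  have htwo : Tendsto (fun r : ℝ => 2 * r) (𝓝[>] 0) (𝓝[>] 0) :=
    tendsto_nhdsWithin_of_tendsto_nhds_of_eventually_within _
      ((continuous_const_mul 2).tendsto' 0 0 (mul_zero 2) |>.mono_left nhdsWithin_le_nhds)
      (eventually_nhdsWithin_of_forall fun r (hr : 0 < r) => mem_Ioi.2 (mul_pos two_pos hr))
  have hlim := ENNReal.Tendsto.const_mul (hx.comp htwo) (a := C * K)
    (Or.inr (ENNReal.mul_ne_top hC ENNReal.ofReal_ne_top))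
  rw [mul_zero] at hlim
  filter_upwards [hlim.eventually (gt_mem_nhds (pos_iff_ne_zero.2 hc)), self_mem_nhdsWithin]
    with r hr (hr0 : 0 < r)
  have hball : μ (closedBall x (2 * r)) = K * μ (closedBall x r) := by
    rw [Measure.addHaar_closedBall_mul_of_pos μ x two_pos, Measure.addHaar_closedBall_center μ x]
  have hpos : μ (closedBall x r) ≠ 0 := (measure_closedBall_pos μ x hr0).ne'
  have hpos₂ : μ (closedBall x (2 * r)) ≠ 0 := (measure_closedBall_pos μ x (by positivity)).ne'
  set T := Sᶜ ∩ closedBall x (2 * r)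
  calc C * μ (closedBall x (2 * r) \ S)
      = C * (μ T / μ (closedBall x (2 * r)) * μ (closedBall x (2 * r))) := by
        rw [ENNReal.div_mul_cancel hpos₂ measure_closedBall_lt_top.ne, sdiff_eq_compl_inter]
    _ = C * K * (μ T / μ (closedBall x (2 * r))) * μ (closedBall x r) := by rw [hball]; ring
    _ < c * μ (closedBall x r) :=
        (ENNReal.mul_lt_mul_iff_left hpos measure_closedBall_lt_top.ne).2 hr

theorem exists_approximatesLinearOn_id_apply_mem {S : Set E} {x : E}
    (hx : Tendsto (fun r => μ (Sᶜ ∩ closedBall x r) / μ (closedBall x r)) (𝓝[>] 0) (𝓝 0)) :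
    ∃ δ : ℝ≥0, 0 < δ ∧ ∀ᶠ r in 𝓝[>] 0, ∀ f : E → E,
      ApproximatesLinearOn f (ContinuousLinearMap.id ℝ E) (closedBall x r) δ →
      MapsTo f (closedBall x r) (closedBall x (2 * r)) → ∃ a ∈ closedBall x r ∩ S, f a ∈ S := by
  obtain ⟨δ, hδ, hδ0⟩ := ((mul_le_addHaar_image_of_lt_det μ (ContinuousLinearMap.id ℝ E)
    (m := 1 / 2) (by simp [ContinuousLinearMap.det])).and self_mem_nhdsWithin).exists
  refine ⟨δ, hδ0, ?_⟩
  filter_upwards [eventually_mul_measure_closedBall_two_mul_diff_lt μ hx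
    (C := 1 + (1 / 2 : ℝ≥0)) (c := (1 / 2 : ℝ≥0)) (by simp) (by simp), self_mem_nhdsWithin]
    with r hr (hr0 : 0 < r) f hf hmaps
  exact exists_mem_inter_apply_mem_of_measure_lt μ (closedBall_subset_closedBall (by linarith))
    hmaps (hδ _ _ (hf.mono_set inter_subset_left)) hr

end AddHaar

theorem exists_mem_forall_mem_closedBall_le_dist {α : Type*} [PseudoMetricSpace α] {S : Set α}
    (hS : ¬Bornology.IsBounded S) (x : α) (r ρ : ℝ) :
    ∃ q ∈ S, ∀ a ∈ closedBall x r, ρ ≤ dist a q := by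
  obtain ⟨q, hqS, hq⟩ : ∃ q ∈ S, r + ρ < dist q x := by
    simpa [not_subset] using not_exists.1 ((isBounded_iff_subset_closedBall x).not.1 hS) (r + ρ)
  exact ⟨q, hqS, fun a ha => by linarith [dist_triangle_left q x a, mem_closedBall.1 ha]⟩

theorem not_collinear_of_inner_vsub_eq_zero {V P : Type*} [NormedAddCommGroup V]
    [InnerProductSpace ℝ V] [MetricSpace P] [NormedAddTorsor V P] {a b c : P} (hb : b ≠ a)
    (hc : c ≠ a) (h : ⟪b -ᵥ a, c -ᵥ a⟫ = 0) : ¬Collinear ℝ ({a, b, c} : Set P) := by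
  have hangle : ∠ b a c = Real.pi / 2 :=
    (InnerProductGeometry.inner_eq_zero_iff_angle_eq_pi_div_two _ _).1 h
  rw [Set.insert_comm, collinear_iff_eq_or_eq_or_angle_eq_zero_or_angle_eq_pi, hangle]
  have := Real.pi_pos
  rintro (h | h | h | h) <;> first | exact hb h | exact hc h | linarith

namespace Orientation

variable {E : Type*} [NormedAddCommGroup E] [InnerProductSpace ℝ E] [Fact (finrank ℝ E = 2)]
  (o : Orientation ℝ E (Fin 2))

noncomputable def rightTriangleVertex (q a : E) : E :=
  a + (2 / ‖q - a‖ ^ 2) • o.rightAngleRotation (q - a)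

theorem rightTriangleVertex_sub (q a : E) :
    o.rightTriangleVertex q a - a = (2 / ‖q - a‖ ^ 2) • o.rightAngleRotation (q - a) :=
  add_sub_cancel_left _ _

theorem inner_sub_rightTriangleVertex_sub (q a : E) :
    ⟪q - a, o.rightTriangleVertex q a - a⟫ = 0 := by
  rw [rightTriangleVertex_sub, real_inner_smul_right, o.inner_rightAngleRotation_right,
    o.areaForm_apply_self, neg_zero, mul_zero]

theorem areaForm_sub_rightTriangleVertex_sub {q a : E} (h : q ≠ a) :
    o.areaForm (q - a) (o.rightTriangleVertex q a - a) = 2 := by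
  have : ‖q - a‖ ≠ 0 := norm_ne_zero_iff.2 (sub_ne_zero.2 h)
  rw [rightTriangleVertex_sub, map_smul, o.areaForm_rightAngleRotation_right,
    real_inner_self_eq_norm_sq, smul_eq_mul]
  field_simp

theorem dist_rightTriangleVertex_self (q a : E) :
    dist (o.rightTriangleVertex q a) a = 2 / dist a q := by
  rcases eq_or_ne a q with rfl | h
  · simp [rightTriangleVertex]
  have : 0 < ‖q - a‖ := norm_pos_iff.2 (sub_ne_zero.2 h.symm)
  rw [dist_eq_norm, rightTriangleVertex_sub, norm_smul, LinearIsometryEquiv.norm_map,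
    Real.norm_of_nonneg (by positivity), dist_comm, dist_eq_norm]
  field_simp

theorem rightTriangleVertex_sub_eq_inversion (q a : E) :
    o.rightTriangleVertex q a - a = (2 : ℝ) • o.rightAngleRotation (q - inversion q 1 a) := by
  have : q - inversion q 1 a = (1 / ‖q - a‖) ^ 2 • (q - a) := by
    rw [inversion, vadd_eq_add, vsub_eq_sub, dist_eq_norm, norm_sub_rev]
    module
  rw [rightTriangleVertex_sub, this, map_smul, smul_smul]
  congr 1
  ring

theorem approximatesLinearOn_rightTriangleVertex {q : E} {s : Set E} {ρ : ℝ} {c : ℝ≥0}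
    (hρ : 0 < ρ) (hc : 2 / ρ ^ 2 ≤ c) (hs : ∀ a ∈ s, ρ ≤ dist a q) :
    ApproximatesLinearOn (o.rightTriangleVertex q) (ContinuousLinearMap.id ℝ E) s c := by
  intro x hx y hy
  have hxq : x ≠ q := dist_pos.1 (hρ.trans_le (hs x hx))
  have hyq : y ≠ q := dist_pos.1 (hρ.trans_le (hs y hy))
  have hdiff : o.rightTriangleVertex q x - o.rightTriangleVertex q y - (x - y)
      = (2 : ℝ) • o.rightAngleRotation (inversion q 1 y - inversion q 1 x) := by
    rw [← sub_sub_sub_cancel_left (inversion q 1 x) _ q, map_sub, smul_sub,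
      ← o.rightTriangleVertex_sub_eq_inversion, ← o.rightTriangleVertex_sub_eq_inversion]
    abel
  have hρ2 : ρ ^ 2 ≤ dist x q * dist y q := by
    rw [sq]
    gcongr
    exacts [hs x hx, hs y hy]
  rw [ContinuousLinearMap.id_apply, hdiff, norm_smul, LinearIsometryEquiv.norm_map,
    ← dist_eq_norm, dist_comm, dist_inversion_inversion hxq hyq, ← dist_eq_norm]
  calc ‖(2 : ℝ)‖ * (1 ^ 2 / (dist x q * dist y q) * dist x y)
      = 2 / (dist x q * dist y q) * dist x y := by simp; ring
    _ ≤ 2 / ρ ^ 2 * dist x y := by gcongr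
    _ ≤ c * dist x y := by gcongr

theorem mapsTo_rightTriangleVertex_closedBall {q x : E} {r ρ : ℝ} (hρ : 0 < ρ) (hρr : 2 / ρ ≤ r)
    (hs : ∀ a ∈ closedBall x r, ρ ≤ dist a q) :
    MapsTo (o.rightTriangleVertex q) (closedBall x r) (closedBall x (2 * r)) := by
  intro a ha
  have hmove : 2 / dist a q ≤ 2 / ρ := div_le_div_of_nonneg_left zero_le_two hρ (hs a ha)
  rw [mem_closedBall] at ha ⊢
  linarith [dist_triangle (o.rightTriangleVertex q a) a x, o.dist_rightTriangleVertex_self q a]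

end Orientation

instance : Fact (finrank ℝ (EuclideanSpace ℝ (Fin 2)) = 2) := ⟨finrank_euclideanSpace_fin⟩

noncomputable abbrev planeOrientation : Orientation ℝ (EuclideanSpace ℝ (Fin 2)) (Fin 2) :=
  (EuclideanSpace.basisFun (Fin 2) ℝ).toBasis.orientation

theorem areaForm_planeOrientation (u v : EuclideanSpace ℝ (Fin 2)) :
    planeOrientation.areaForm u v = det2 u v := by
  rw [Orientation.areaForm_to_volumeForm,
    Orientation.volumeForm_robust _ (EuclideanSpace.basisFun (Fin 2) ℝ) rfl]
  simp [Basis.det_apply, Matrix.det_fin_two, det2, Basis.toMatrix_apply]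
  ring

theorem right_triangle_rightTriangleVertex {q a : EuclideanSpace ℝ (Fin 2)} (h : q ≠ a) :
    let c := planeOrientation.rightTriangleVertex q a
    ⟪q - a, c - a⟫ = 0 ∧ ¬Collinear ℝ ({a, q, c} : Set (EuclideanSpace ℝ (Fin 2))) ∧
      (1 / 2) * |det2 (q - a) (c - a)| = 1 := by
  have harea := planeOrientation.areaForm_sub_rightTriangleVertex_sub h
  refine ⟨planeOrientation.inner_sub_rightTriangleVertex_sub q a,
    not_collinear_of_inner_vsub_eq_zero h (fun hc => by simp [hc] at harea)
      (planeOrientation.inner_sub_rightTriangleVertex_sub q a), ?_⟩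
  rw [← areaForm_planeOrientation, harea]
  norm_num

/-- Every unbounded measurable subset of the plane of positive Lebesgue measure contains
the three vertices of a right-angled triangle of area 1. -/
theorem right_triangle_of_unbounded_pos_measure
    (S : Set (EuclideanSpace ℝ (Fin 2))) (hmeas : MeasurableSet S)
    (hunb : ¬ Bornology.IsBounded S) (hpos : 0 < volume S) :
    ∃ a b c : EuclideanSpace ℝ (Fin 2), a ∈ S ∧ b ∈ S ∧ c ∈ S ∧
      ⟪b - a, c - a⟫ = 0 ∧
      ¬ Collinear ℝ ({a, b, c} : Set (EuclideanSpace ℝ (Fin 2))) ∧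
      (1 / 2) * |det2 (b - a) (c - a)| = 1 := by
  obtain ⟨x, -, hx⟩ :=
    exists_mem_tendsto_measure_compl_inter_closedBall_div volume hmeas hpos.ne'
  obtain ⟨δ, hδ, hδr⟩ := exists_approximatesLinearOn_id_apply_mem volume hx
  obtain ⟨r, hr, hr0⟩ := (hδr.and self_mem_nhdsWithin).exists
  obtain ⟨ρ, hρ, hρr, hρδ⟩ : ∃ ρ : ℝ, 0 < ρ ∧ 2 / ρ ≤ r ∧ 2 / ρ ^ 2 ≤ δ :=
    ((eventually_gt_atTop 0).and <|
      ((tendsto_const_nhds.div_atTop tendsto_id).eventually (ge_mem_nhds hr0)).and <|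
      (tendsto_const_nhds.div_atTop (tendsto_pow_atTop two_ne_zero)).eventually
        (ge_mem_nhds (NNReal.coe_pos.2 hδ))).exists
  obtain ⟨q, hqS, hfar⟩ := exists_mem_forall_mem_closedBall_le_dist hunb x r ρ
  obtain ⟨a, ⟨haB, haS⟩, hcS⟩ := hr _
    (planeOrientation.approximatesLinearOn_rightTriangleVertex hρ hρδ hfar)
    (planeOrientation.mapsTo_rightTriangleVertex_closedBall hρ hρr hfar)
  have hqa : q ≠ a := by
    rintro rfl
    linarith [hfar q haB, dist_self q]
  exact ⟨a, q, _, haS, hqS, hcS, right_triangle_rightTriangleVertex hqa⟩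
end

section
/- Let r > √2, θ ∈ ℝ, φ(r) = arcsin(2/r²), p = (r·cos θ, r·sin θ), q = (r·cos(θ + φ(r)), r·sin(θ + φ(r))), and let m = (p + q)/2 be the midpoint of p and q. Then ⟨0 − m, p − m⟩ = 0 and (1/2)·|det(p − m, 0 − m)| = 1/2; in other words, the triangle with vertices 0, p, m is a right-angled triangle (with the right angle at m) of area 1/2. -/
/-!
Both `p` and `q` lie on the circle of radius `r` about `0`, so `0` is on the perpendicular
bisector of `pq` and the angle at the midpoint `m` is right. The triangle `0pm` is half of the
triangle `0pq`, whose doubled area is `det(p, q) = r² sin φ = 2`.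
-/

open MeasureTheory Metric Real RealInnerProductSpace

section Midpoint

variable {V P : Type*} [NormedAddCommGroup V] [InnerProductSpace ℝ V] [MetricSpace P]
  [NormedAddTorsor V P]

theorem inner_vsub_midpoint_vsub_midpoint_eq_zero {c p q : P} (h : dist c p = dist c q) :
    ⟪c -ᵥ midpoint ℝ p q, p -ᵥ midpoint ℝ p q⟫ = 0 := by
  have hc := AffineSubspace.mem_perpBisector_iff_inner_eq_zero.mp
    (AffineSubspace.mem_perpBisector_iff_dist_eq.mpr h)
  rw [left_vsub_midpoint, real_inner_smul_right, ← neg_vsub_eq_vsub_rev q p, inner_neg_right,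
    hc, neg_zero, mul_zero]

end Midpoint

theorem EuclideanSpace.norm_polar {r θ : ℝ} {p : EuclideanSpace ℝ (Fin 2)}
    (hp : p = ![r * cos θ, r * sin θ]) : ‖p‖ = |r| := by
  rw [EuclideanSpace.norm_eq, Fin.sum_univ_two, hp, ← sqrt_sq_eq_abs]
  congr 1
  simp only [Matrix.cons_val_zero, Matrix.cons_val_one, Real.norm_eq_abs, sq_abs]
  linear_combination r ^ 2 * sin_sq_add_cos_sq θ

theorem det2_polar {r s a b : ℝ} {p q : EuclideanSpace ℝ (Fin 2)}
    (hp : p = ![r * cos a, r * sin a]) (hq : q = ![s * cos b, s * sin b]) :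
    det2 p q = r * s * sin (b - a) := by
  simp only [det2, hp, hq, Matrix.cons_val_zero, Matrix.cons_val_one, sin_sub]
  ring

theorem det2_sub_midpoint_sub_midpoint (c p q : EuclideanSpace ℝ (Fin 2)) :
    det2 (p - midpoint ℝ p q) (c - midpoint ℝ p q) = -det2 (p - c) (q - c) / 2 := by
  simp only [det2, midpoint_eq_smul_add, invOf_eq_inv, PiLp.sub_apply, PiLp.smul_apply,
    PiLp.add_apply, smul_eq_mul]
  ring

theorem sin_arcsin_two_div_sq {r : ℝ} (hr : 2 ≤ r ^ 2) :
    sin (arcsin (2 / r ^ 2)) = 2 / r ^ 2 := by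
  have hr0 : 0 < r ^ 2 := by linarith
  exact sin_arcsin (by linarith [div_nonneg zero_le_two hr0.le]) ((div_le_one hr0).mpr hr)

/-- For `r > √2`, `φ(r) = arcsin(2/r²)`, `p = (r cos θ, r sin θ)`,
`q = (r cos (θ + φ(r)), r sin (θ + φ(r)))` and `m = (p + q)/2`, the triangle with vertices
`0`, `p`, `m` has a right angle at `m` and area `1/2`. -/
theorem right_triangle_half_area_of_midpoint (r θ : ℝ) (hr : Real.sqrt 2 < r)
    (φ : ℝ) (hφ : φ = Real.arcsin (2 / r ^ 2))
    (p q m : EuclideanSpace ℝ (Fin 2))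
    (hp : p = ![r * Real.cos θ, r * Real.sin θ])
    (hq : q = ![r * Real.cos (θ + φ), r * Real.sin (θ + φ)])
    (hm : m = midpoint ℝ p q) :
    ⟪(0 : EuclideanSpace ℝ (Fin 2)) - m, p - m⟫ = 0 ∧
    (1 / 2) * |det2 (p - m) ((0 : EuclideanSpace ℝ (Fin 2)) - m)| = 1 / 2 := by
  have hr2 : 2 ≤ r ^ 2 := (lt_sq_of_sqrt_lt hr).le
  subst hm
  constructor
  · refine inner_vsub_midpoint_vsub_midpoint_eq_zero (c := (0 : EuclideanSpace ℝ (Fin 2))) ?_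
    rw [dist_zero_left, dist_zero_left, EuclideanSpace.norm_polar hp,
      EuclideanSpace.norm_polar hq]
  · rw [det2_sub_midpoint_sub_midpoint, sub_zero, sub_zero, det2_polar hp hq,
      add_sub_cancel_left, hφ, sin_arcsin_two_div_sq hr2]
    have hr0 : r ≠ 0 := by rintro rfl; norm_num at hr2
    rw [show r * r * (2 / r ^ 2) = 2 by field_simp]
    norm_num
end

section
/- Let R > 1 and let r > 0 satisfy (R²/(R² − 1))·(2/r²) < 1. Set ψ(r) = arcsin((R²/(R² − 1))·(2/r²)), and for θ ∈ ℝ let p = (r·cos θ, r·sin θ) and q = (r·cos(θ + ψ(r)), r·sin(θ + ψ(r))). Then the four points p, q, R⁻¹·q, R⁻¹·p (in this cyclic order) are the vertices of an isosceles trapezoid of area 1: R⁻¹·p − R⁻¹·q = R⁻¹·(q − p) scaled appropriately so the side from R⁻¹·q to R⁻¹·p is parallel to the side from p to q with length ratio 1/R ≠ 1, the legs satisfy dist(q, R⁻¹·q) = dist(p, R⁻¹·p), and the shoelace area equals (1 − 1/R²)·(r²/2)·sin(ψ(r)) = 1. -/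
/-!
Both `p` and `q` lie on the circle of radius `r`, so scaling them by `R⁻¹` moves each towards the
origin by the same distance `(1 - R⁻¹) r`, and the side `R⁻¹ q → R⁻¹ p` is the side `p → q`
scaled by `R⁻¹`. The shoelace sum of `p, q, c q, c p` is `(1 - c²) det(p, q)`, and
`det(p, q) = r² sin ψ`; the value of `sin ψ` is chosen exactly so that the area is `1`.
-/

open MeasureTheory Metric Real

noncomputable def polarPoint (r θ : ℝ) : EuclideanSpace ℝ (Fin 2) := !₂[r * cos θ, r * sin θ]

theorem dist_self_smul {E : Type*} [SeminormedAddCommGroup E] [NormedSpace ℝ E] (c : ℝ) (x : E) :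
    dist x (c • x) = |1 - c| * ‖x‖ := by
  rw [dist_eq_norm, ← Real.norm_eq_abs, ← norm_smul, sub_smul, one_smul]

theorem norm_polarPoint (r θ : ℝ) : ‖polarPoint r θ‖ = |r| := by
  have h : r ^ 2 * cos θ ^ 2 + r ^ 2 * sin θ ^ 2 = r ^ 2 := by
    rw [← mul_add, cos_sq_add_sin_sq, mul_one]
  simp [EuclideanSpace.norm_eq, polarPoint, mul_pow, h, sqrt_sq_eq_abs]

theorem det2_self (u : EuclideanSpace ℝ (Fin 2)) : det2 u u = 0 := by
  rw [det2, mul_comm, sub_self]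

theorem det2_polarPoint (r α β : ℝ) :
    det2 (polarPoint r α) (polarPoint r β) = r ^ 2 * sin (β - α) := by
  simp only [det2, polarPoint, PiLp.toLp_apply, Matrix.cons_val_zero, Matrix.cons_val_one,
    Matrix.cons_val_fin_one, sin_sub]
  ring

theorem shoelace_det2_smul (p q : EuclideanSpace ℝ (Fin 2)) (c : ℝ) :
    det2 (q - p) (c • p - p) + det2 (c • q - q) (c • p - q) = (1 - c ^ 2) * det2 p q := by
  simp only [det2, PiLp.sub_apply, PiLp.smul_apply, smul_eq_mul]
  ring

/-- For `R > 1`, `r > 0` with `(R²/(R²−1))·(2/r²) < 1`, `ψ = arcsin((R²/(R²−1))·(2/r²))`,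
the four points `p, q, R⁻¹q, R⁻¹p` (in this cyclic order) are the vertices of an isosceles
trapezoid of area `1`, where `p = (r cos θ, r sin θ)` and
`q = (r cos (θ + ψ), r sin (θ + ψ))`. -/
theorem isosceles_trapezoid_of_rotation_and_scaling (R r θ : ℝ) (hR : 1 < R) (hr : 0 < r)
    (harg : R ^ 2 / (R ^ 2 - 1) * (2 / r ^ 2) < 1)
    (ψ : ℝ) (hψ : ψ = Real.arcsin (R ^ 2 / (R ^ 2 - 1) * (2 / r ^ 2)))
    (p q : EuclideanSpace ℝ (Fin 2))
    (hp : p = ![r * Real.cos θ, r * Real.sin θ])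
    (hq : q = ![r * Real.cos (θ + ψ), r * Real.sin (θ + ψ)]) :
    R⁻¹ • q - R⁻¹ • p = R⁻¹ • (q - p) ∧
    0 < R⁻¹ ∧ R⁻¹ ≠ 1 ∧ q - p ≠ 0 ∧
    dist p (R⁻¹ • p) = dist q (R⁻¹ • q) ∧
    (1 / 2) * |det2 (q - p) (R⁻¹ • p - p) + det2 (R⁻¹ • q - q) (R⁻¹ • p - q)| =
      (1 - 1 / R ^ 2) * (r ^ 2 / 2) * Real.sin ψ ∧
    (1 - 1 / R ^ 2) * (r ^ 2 / 2) * Real.sin ψ = 1 := by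
  -- `hp` and `hq` elaborate as equations between the underlying functions `p.ofLp`, `q.ofLp`.
  obtain rfl : p = polarPoint r θ := WithLp.ofLp_injective 2 hp
  obtain rfl : q = polarPoint r (θ + ψ) := WithLp.ofLp_injective 2 hq
  have hR2 : 1 < R ^ 2 := one_lt_pow₀ hR two_ne_zero
  have harg_pos : 0 < R ^ 2 / (R ^ 2 - 1) * (2 / r ^ 2) := by
    have : 0 < R ^ 2 - 1 := sub_pos.2 hR2
    positivity
  have hsin : sin ψ = R ^ 2 / (R ^ 2 - 1) * (2 / r ^ 2) := by
    rw [hψ, sin_arcsin (by linarith) harg.le]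
  have hdet : det2 (polarPoint r θ) (polarPoint r (θ + ψ)) = r ^ 2 * sin ψ := by
    rw [det2_polarPoint, add_sub_cancel_left]
  have hdet_pos : 0 < r ^ 2 * sin ψ := mul_pos (pow_pos hr 2) (hsin ▸ harg_pos)
  have hscale : 0 < 1 - 1 / R ^ 2 := sub_pos.2 ((div_lt_one (by positivity)).2 hR2)
  refine ⟨(smul_sub _ _ _).symm, inv_pos.2 (by positivity), (inv_lt_one_of_one_lt₀ hR).ne,
    ?_, ?_, ?_, ?_⟩
  · rw [sub_ne_zero]
    intro h
    rw [h, det2_self] at hdet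
    exact hdet_pos.ne hdet
  · rw [dist_self_smul, dist_self_smul, norm_polarPoint, norm_polarPoint]
  · rw [shoelace_det2_smul, hdet, inv_pow, ← one_div, abs_of_pos (mul_pos hscale hdet_pos)]
    ring
  · rw [hsin]
    field_simp
    exact div_self (sub_pos.2 hR2).ne'
end

section
/- Let S ⊆ ℝ² be measurable and suppose the origin is a point of density 1 of S, i.e. lim_{δ→0⁺} μ(B(0,δ) ∩ S)/μ(B(0,δ)) = 1. For R > 0 let R·S = {R·s : s ∈ S} and S_R = S ∩ (R·S). Then for every bounded measurable set B ⊆ ℝ², one has lim_{R→∞} μ(B ∩ S_R) = μ(B ∩ S); equivalently, μ((B ∩ S) \ S_R) → 0 as R → ∞. -/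
/-!
Rescaling by `R` maps `ball 0 (M / R)` onto `ball 0 M` and multiplies all measures by `R ^ 2`, so
the proportion of `ball 0 M` missed by `R • S` equals the proportion of `ball 0 (M / R)` missed
by `S`. Since `0` is a density point of `S`, this proportion tends to `0` as `R → ∞`; for `B`
inside `ball 0 M` this bounds `μ((B ∩ S) \ R • S)`, which is the defect of `μ(B ∩ S_R)` from
`μ(B ∩ S)`.
-/

open MeasureTheory Metric Filter Pointwise Set
open scoped ENNReal Topology

section MeasureSpace

variable {α ι : Type*} [MeasurableSpace α] {μ : Measure α}

theorem measure_sdiff_div_eq_one_sub {A S : Set α} (hS : NullMeasurableSet S μ)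
    (hA₀ : μ A ≠ 0) (hA : μ A ≠ ∞) : μ (A \ S) / μ A = 1 - μ (A ∩ S) / μ A := by
  have hdiff : μ (A \ S) = μ A - μ (A ∩ S) :=
    ENNReal.eq_sub_of_add_eq (measure_ne_top_of_subset inter_subset_left hA)
      (by rw [add_comm, measure_inter_add_sdiff₀ A hS])
  rw [hdiff, ENNReal.sub_div fun _ _ => hA₀, ENNReal.div_self hA₀ hA]

theorem tendsto_measure_sdiff_div_of_tendsto_measure_inter_div {l : Filter ι} {A : ι → Set α}
    {S : Set α} (hS : NullMeasurableSet S μ)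
    (hA : ∀ᶠ i in l, μ (A i) ≠ 0 ∧ μ (A i) ≠ ∞)
    (h : Tendsto (fun i => μ (A i ∩ S) / μ (A i)) l (𝓝 1)) :
    Tendsto (fun i => μ (A i \ S) / μ (A i)) l (𝓝 0) := by
  have h₁ := ENNReal.Tendsto.sub tendsto_const_nhds h (Or.inl ENNReal.one_ne_top)
  rw [tsub_self] at h₁
  refine h₁.congr' ?_
  filter_upwards [hA] with i ⟨hA₀, hA⟩
  exact (measure_sdiff_div_eq_one_sub hS hA₀ hA).symm

theorem tendsto_measure_inter_of_tendsto_measure_sdiff {l : Filter ι} {T : Set α}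
    {U : ι → Set α} (hT : μ T ≠ ∞) (h : Tendsto (fun i => μ (T \ U i)) l (𝓝 0)) :
    Tendsto (fun i => μ (T ∩ U i)) l (𝓝 (μ T)) := by
  have hlower := ENNReal.Tendsto.sub (tendsto_const_nhds (x := μ T)) h (Or.inl hT)
  rw [tsub_zero] at hlower
  refine tendsto_of_tendsto_of_tendsto_of_le_of_le hlower tendsto_const_nhds (fun i => ?_)
    fun i => measure_mono inter_subset_left
  rw [tsub_le_iff_right]
  calc μ T = μ (T ∩ U i ∪ T \ U i) := by rw [inter_union_sdiff]
    _ ≤ μ (T ∩ U i) + μ (T \ U i) := measure_union_le _ _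

end MeasureSpace

section AddHaar

variable {E : Type*} [NormedAddCommGroup E] [NormedSpace ℝ E] [MeasurableSpace E] [BorelSpace E]
  [FiniteDimensional ℝ E] {μ : Measure E} [μ.IsAddHaarMeasure]

theorem addHaar_smul_div_addHaar_smul {r : ℝ} (hr : r ≠ 0) (A C : Set E) :
    μ (r • A) / μ (r • C) = μ A / μ C := by
  rw [Measure.addHaar_smul, Measure.addHaar_smul,
    ENNReal.mul_div_mul_left _ _ _ ENNReal.ofReal_ne_top]
  exact ENNReal.ofReal_pos.2 (abs_pos.2 (pow_ne_zero _ hr)) |>.ne'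

theorem addHaar_ball_sdiff_smul_div_addHaar_ball {R : ℝ} (hR : 0 < R) (S : Set E) (δ : ℝ) :
    μ (ball 0 (R * δ) \ R • S) / μ (ball 0 (R * δ)) =
      μ (ball 0 δ \ S) / μ (ball 0 δ) := by
  have hball : R • ball (0 : E) δ = ball 0 (R * δ) := by
    rw [_root_.smul_ball hR.ne', smul_zero, Real.norm_of_nonneg hR.le]
  rw [← hball, ← smul_set_sdiff₀ hR.ne', addHaar_smul_div_addHaar_smul hR.ne']

theorem tendsto_addHaar_sdiff_smul_atTop {S : Set E}
    (hS : Tendsto (fun δ => μ (ball 0 δ \ S) / μ (ball 0 δ)) (𝓝[>] 0) (𝓝 0)) {B : Set E}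
    (hB : Bornology.IsBounded B) : Tendsto (fun R : ℝ => μ (B \ R • S)) atTop (𝓝 0) := by
  obtain ⟨M, hM, hBM⟩ := hB.subset_ball_lt 0 0
  have hMR : Tendsto (fun R : ℝ => M / R) atTop (𝓝[>] 0) :=
    tendsto_nhdsWithin_iff.2 ⟨tendsto_const_nhds.div_atTop tendsto_id,
      (eventually_gt_atTop 0).mono fun R hR => div_pos hM hR⟩
  have hupper := ENNReal.Tendsto.const_mul (hS.comp hMR)
    (Or.inr (measure_ball_lt_top (μ := μ) (x := 0) (r := M)).ne)
  rw [mul_zero] at hupper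
  refine tendsto_of_tendsto_of_tendsto_of_le_of_le' tendsto_const_nhds hupper
    (Eventually.of_forall fun _ => zero_le) ?_
  filter_upwards [eventually_gt_atTop 0] with R hR
  calc μ (B \ R • S) ≤ μ (ball 0 M \ R • S) := measure_mono (sdiff_subset_sdiff_left hBM)
    _ = μ (ball 0 M) * (μ (ball 0 M \ R • S) / μ (ball 0 M)) :=
      (ENNReal.mul_div_cancel (measure_ball_pos μ 0 hM).ne' measure_ball_lt_top.ne).symm
    _ = μ (ball 0 M) * (μ (ball 0 (M / R) \ S) / μ (ball 0 (M / R))) := by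
      rw [← addHaar_ball_sdiff_smul_div_addHaar_ball hR S (M / R), mul_div_cancel₀ _ hR.ne']

end AddHaar

/-- If the origin is a point of density `1` of a measurable set `S ⊆ ℝ²`, then for every
bounded measurable set `B`, letting `S_R = S ∩ (R • S)`, one has
`μ(B ∩ S_R) → μ(B ∩ S)` as `R → ∞`. -/
theorem measure_inter_dilation_tendsto
    (S : Set (EuclideanSpace ℝ (Fin 2))) (hS : MeasurableSet S)
    (hdensity : Tendsto
      (fun δ : ℝ => volume (ball (0 : EuclideanSpace ℝ (Fin 2)) δ ∩ S) /
        volume (ball (0 : EuclideanSpace ℝ (Fin 2)) δ))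
      (nhdsWithin 0 (Set.Ioi 0)) (nhds 1)) :
    ∀ B : Set (EuclideanSpace ℝ (Fin 2)), MeasurableSet B → Bornology.IsBounded B →
      Tendsto (fun R : ℝ => volume (B ∩ (S ∩ R • S))) atTop (nhds (volume (B ∩ S))) := by
  intro B _ hB
  have hBS : Bornology.IsBounded (B ∩ S) := hB.subset inter_subset_left
  have hcodensity : Tendsto (fun δ => volume (ball (0 : EuclideanSpace ℝ (Fin 2)) δ \ S) /
      volume (ball (0 : EuclideanSpace ℝ (Fin 2)) δ)) (𝓝[>] 0) (𝓝 0) := by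
    refine tendsto_measure_sdiff_div_of_tendsto_measure_inter_div hS.nullMeasurableSet ?_ hdensity
    filter_upwards [self_mem_nhdsWithin] with δ (hδ : 0 < δ)
    exact ⟨(measure_ball_pos _ _ hδ).ne', measure_ball_lt_top.ne⟩
  simpa only [inter_assoc] using tendsto_measure_inter_of_tendsto_measure_sdiff
    hBS.measure_lt_top.ne (tendsto_addHaar_sdiff_smul_atTop hcodensity hBS)
end

section
/- Let A ∈ ℝ², ε > 0, B = B(A, ε), B' = B(A, ε/2). Let S ⊆ ℝ² be measurable with μ(B ∩ S) > (8/9)·μ(B). Let F : B' → ℝ² be an injective measurable map with F(B') ⊆ B such that for every measurable E ⊆ B' the image F(E) is measurable with μ(F(E)) ≥ (4/5)·μ(E). Then there exists a point p ∈ B' ∩ S with F(p) ∈ B ∩ S. -/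
/-! If no point of `B' ∩ S` were mapped into `S`, then `F '' (B' ∩ S)` would lie in `B \ S`,
so `μ (B \ S) ≥ (4/5) μ (B' ∩ S) ≥ (4/5) (μ B' - μ (B \ S))`, i.e. `μ (B \ S) ≥ (4/9) μ B' = μ B / 9`,
against the density of `S` in `B`. -/

open MeasureTheory Metric ENNReal NNReal

theorem MeasureTheory.Measure.addHaar_ball_eq_two_pow_mul_half {E : Type*}
    [NormedAddCommGroup E] [NormedSpace ℝ E] [MeasurableSpace E] [BorelSpace E]
    [FiniteDimensional ℝ E] [Nontrivial E] (μ : Measure E) [μ.IsAddHaarMeasure] (x : E) (r : ℝ) :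
    μ (ball x r) = 2 ^ Module.finrank ℝ E * μ (ball x (r / 2)) := by
  have h := Measure.addHaar_ball_mul μ x zero_le_two (r / 2)
  rw [mul_div_cancel₀ r two_ne_zero, ENNReal.ofReal_pow zero_le_two, ENNReal.ofReal_ofNat] at h
  rw [h, Measure.addHaar_ball_center μ x]

theorem ENNReal.le_eight_ninths_mul_of_le_add {b t d w e : ℝ≥0∞} (hb : b ≠ ∞)
    (hsplit : t + d = b) (hbw : b = 4 * w) (hw : w ≤ e + d) (he : 4 / 5 * e ≤ d) :
    t ≤ 8 / 9 * b := by
  have hd : d ≠ ∞ := ne_top_of_le_ne_top hb (hsplit ▸ le_add_self)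
  have ht : t ≠ ∞ := ne_top_of_le_ne_top hb (hsplit ▸ le_self_add)
  have hw' : w ≠ ∞ := ne_top_of_le_ne_top hb (hbw ▸ le_mul_of_one_le_left' (by norm_num))
  have he' : e ≠ ∞ := by rintro rfl; simp at he; exact hd he
  lift b to ℝ≥0 using hb
  lift t to ℝ≥0 using ht
  lift d to ℝ≥0 using hd
  lift w to ℝ≥0 using hw'
  lift e to ℝ≥0 using he'
  rw [← ENNReal.coe_ofNat, ← ENNReal.coe_ofNat, ← ENNReal.coe_div (by norm_num)] at he ⊢
  norm_cast at *
  rw [← NNReal.coe_le_coe] at he hw ⊢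
  apply_fun ((↑) : ℝ≥0 → ℝ) at hsplit hbw
  push_cast at *
  linarith

theorem MeasureTheory.exists_mem_inter_image_mem_inter_of_measure_gt {α : Type*}
    [MeasurableSpace α] {μ : Measure α} {B B' S : Set α} {F : α → α} (hB : μ B ≠ ∞)
    (hS : MeasurableSet S) (hB'B : B' ⊆ B) (hquarter : μ B = 4 * μ B') (hFmaps : F '' B' ⊆ B)
    (hFimage : 4 / 5 * μ (B' ∩ S) ≤ μ (F '' (B' ∩ S))) (hdense : 8 / 9 * μ B < μ (B ∩ S)) :
    ∃ p ∈ B' ∩ S, F p ∈ B ∩ S := by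
  by_contra! hmiss
  have himage : F '' (B' ∩ S) ⊆ B \ S := by
    rintro _ ⟨p, hp, rfl⟩
    have hFp : F p ∈ B := hFmaps ⟨p, hp.1, rfl⟩
    exact ⟨hFp, fun hFpS => hmiss p hp ⟨hFp, hFpS⟩⟩
  have hcover : μ B' ≤ μ (B' ∩ S) + μ (B \ S) := by
    refine (measure_mono fun x hx => ?_).trans (measure_union_le _ _)
    by_cases hxS : x ∈ S
    exacts [Or.inl ⟨hx, hxS⟩, Or.inr ⟨hB'B hx, hxS⟩]
  exact hdense.not_ge <| ENNReal.le_eight_ninths_mul_of_le_add hB (measure_inter_add_sdiff B hS)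
    hquarter hcover (hFimage.trans (measure_mono himage))

theorem exists_point_image_in_set_general (A : EuclideanSpace ℝ (Fin 2)) (ε : ℝ) (hε : 0 < ε)
    (S : Set (EuclideanSpace ℝ (Fin 2))) (hS : MeasurableSet S)
    (hdense : (8 / 9 : ℝ≥0∞) * volume (ball A ε) < volume (ball A ε ∩ S))
    (F : EuclideanSpace ℝ (Fin 2) → EuclideanSpace ℝ (Fin 2))
    (hFmaps : F '' ball A (ε / 2) ⊆ ball A ε)
    (hFimage : ∀ E : Set (EuclideanSpace ℝ (Fin 2)), E ⊆ ball A (ε / 2) → MeasurableSet E →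
      MeasurableSet (F '' E) ∧ (4 / 5 : ℝ≥0∞) * volume E ≤ volume (F '' E)) :
    ∃ p ∈ ball A (ε / 2) ∩ S, F p ∈ ball A ε ∩ S := by
  have hquarter : volume (ball A ε) = 4 * volume (ball A (ε / 2)) := by
    rw [Measure.addHaar_ball_eq_two_pow_mul_half, finrank_euclideanSpace_fin]
    norm_num
  exact exists_mem_inter_image_mem_inter_of_measure_gt measure_ball_lt_top.ne hS
    (ball_subset_ball (by linarith)) hquarter hFmaps
    (hFimage _ Set.inter_subset_left (measurableSet_ball.inter hS)).2 hdense

/-- Density/pigeonhole lemma: if `S` occupies more than `8/9` of the disk `B = B(A, ε)` and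
`F : B' → B` (where `B' = B(A, ε/2)`) is an injective measurable map that shrinks Lebesgue
measure by a factor of at most `4/5`, then some `p ∈ B' ∩ S` has `F p ∈ B ∩ S`. -/
theorem exists_point_image_in_set (A : EuclideanSpace ℝ (Fin 2)) (ε : ℝ) (hε : 0 < ε)
    (S : Set (EuclideanSpace ℝ (Fin 2))) (hS : MeasurableSet S)
    (hdense : (8 / 9 : ℝ≥0∞) * volume (ball A ε) < volume (ball A ε ∩ S))
    (F : EuclideanSpace ℝ (Fin 2) → EuclideanSpace ℝ (Fin 2))
    (hFinj : Set.InjOn F (ball A (ε / 2)))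
    (hFmeas : Measurable fun x : ball A (ε / 2) => F x)
    (hFmaps : F '' ball A (ε / 2) ⊆ ball A ε)
    (hFimage : ∀ E : Set (EuclideanSpace ℝ (Fin 2)), E ⊆ ball A (ε / 2) → MeasurableSet E →
      MeasurableSet (F '' E) ∧ (4 / 5 : ℝ≥0∞) * volume E ≤ volume (F '' E)) :
    ∃ p ∈ ball A (ε / 2) ∩ S, F p ∈ ball A ε ∩ S :=
  exists_point_image_in_set_general A ε hε S hS hdense F hFmaps hFimage
end

section
/- Let S₀ = {p ∈ ℝ² : ‖p‖ ≤ 1/10} ∪ {(n, 0) : n = 1, 2, 3, …}. Then S₀ is an unbounded measurable subset of ℝ² of positive (finite) Lebesgue measure, and S₀ does NOT contain the four vertices of any isosceles trapezoid of area 1: there are no points a, b, c, d ∈ S₀ and real t with 0 < t, t ≠ 1, c − d = t·(b − a) ≠ 0, dist(a,d) = dist(b,c), and shoelace area (1/2)·|det(b − a, d − a) + det(c − b, d − b)| = 1. -/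
open MeasureTheory Metric

/-- The counterexample set: the closed disk of radius `1/10` about the origin together with
the points `(n, 0)` for `n = 1, 2, 3, …`. -/
noncomputable def S₀ : Set (EuclideanSpace ℝ (Fin 2)) :=
  {p : EuclideanSpace ℝ (Fin 2) | ‖p‖ ≤ 1 / 10} ∪
    {p : EuclideanSpace ℝ (Fin 2) | ∃ n : ℕ, 0 < n ∧ p = ![(n : ℝ), 0]}

/-!
The shoelace area is `(1 + t)/2 · |det(b − a, d − a)|`, and the four triangles spanned by three of
the vertices have areas `|det(b − a, d − a)|/2` or `t` times that, so the vertices are distinct and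
no three of them lie on the x-axis. Four vertices in the disk span area at most `4/100`. Otherwise
one or two vertices are points `(n, 0)`. Comparing the legs `ad` and `bc`, using that two disk
points are at distance `≤ 1/5`, a disk point and `(n, 0)` at distance `n ± 1/10`, and distinct
points `(m, 0)`, `(n, 0)` at distance `|m − n| ≥ 1`, rules out every configuration except a
diagonal pair `a, c` or `b, d` on the axis; there `c − d` and `b − a` have x-coordinates of
opposite signs.
-/

local notation "ℝ²" => EuclideanSpace ℝ (Fin 2)

theorem abs_det2_le_norm_mul_norm (u v : ℝ²) : |det2 u v| ≤ ‖u‖ * ‖v‖ := by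
  refine abs_le_of_sq_le_sq ?_ (by positivity)
  rw [mul_pow, EuclideanSpace.real_norm_sq_eq, EuclideanSpace.real_norm_sq_eq]
  simp only [det2, Fin.sum_univ_two]
  nlinarith [sq_nonneg (u 0 * v 0 + u 1 * v 1)]

theorem abs_dist_sub_norm_le {E : Type*} [SeminormedAddGroup E] (x y : E) :
    |dist x y - ‖x‖| ≤ ‖y‖ := by
  simpa [dist_comm y x] using abs_dist_sub_le y 0 x

theorem dist_le_two_mul_of_mem_closedBall {X : Type*} [PseudoMetricSpace X] {x p q : X} {r : ℝ}
    (hp : p ∈ closedBall x r) (hq : q ∈ closedBall x r) : dist p q ≤ 2 * r := by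
  linarith [dist_triangle_right p q x, mem_closedBall.1 hp, mem_closedBall.1 hq]

/-- Parallelograms (`t = 1`) are not excluded. -/
structure IsUnitIsoscelesTrapezoid (a b c d : ℝ²) (t : ℝ) : Prop where
  pos : 0 < t
  sub_eq : c - d = t • (b - a)
  dist_eq : dist a d = dist b c
  area_eq : 1 / 2 * |det2 (b - a) (d - a) + det2 (c - b) (d - b)| = 1

namespace IsUnitIsoscelesTrapezoid

variable {a b c d : ℝ²} {t : ℝ}

theorem apply_sub_eq (h : IsUnitIsoscelesTrapezoid a b c d t) (i : Fin 2) :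
    c i - d i = t * (b i - a i) := by
  simpa using congrArg (· i) h.sub_eq

theorem one_add_mul_abs_det2 (h : IsUnitIsoscelesTrapezoid a b c d t) :
    (1 + t) * |det2 (b - a) (d - a)| = 2 := by
  have hsum : det2 (b - a) (d - a) + det2 (c - b) (d - b) = (1 + t) * det2 (b - a) (d - a) := by
    simp only [det2, PiLp.sub_apply]
    linear_combination (d 1 - b 1) * h.apply_sub_eq 0 - (d 0 - b 0) * h.apply_sub_eq 1
  have harea := h.area_eq
  rw [hsum, abs_mul, abs_of_pos (by linarith [h.pos])] at harea
  linarith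

theorem det2_sub_sub_ne_zero (h : IsUnitIsoscelesTrapezoid a b c d t) :
    det2 (b - a) (c - a) ≠ 0 ∧ det2 (b - a) (d - a) ≠ 0 ∧ det2 (c - a) (d - a) ≠ 0 ∧
      det2 (c - b) (d - b) ≠ 0 := by
  have hδ : det2 (b - a) (d - a) ≠ 0 := by
    intro h0
    simpa [h0] using h.one_add_mul_abs_det2
  have h0 := h.apply_sub_eq 0
  have h1 := h.apply_sub_eq 1
  have habc : det2 (b - a) (c - a) = det2 (b - a) (d - a) := by
    simp only [det2, PiLp.sub_apply]
    linear_combination (b 0 - a 0) * h1 - (b 1 - a 1) * h0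
  have hacd : det2 (c - a) (d - a) = t * det2 (b - a) (d - a) := by
    simp only [det2, PiLp.sub_apply]
    linear_combination (d 1 - a 1) * h0 - (d 0 - a 0) * h1
  have hbcd : det2 (c - b) (d - b) = t * det2 (b - a) (d - a) := by
    simp only [det2, PiLp.sub_apply]
    linear_combination (d 1 - b 1) * h0 - (d 0 - b 0) * h1
  exact ⟨habc ▸ hδ, hδ, hacd ▸ mul_ne_zero h.pos.ne' hδ, hbcd ▸ mul_ne_zero h.pos.ne' hδ⟩

theorem ne (h : IsUnitIsoscelesTrapezoid a b c d t) :
    a ≠ b ∧ a ≠ d ∧ b ≠ c ∧ c ≠ d := by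
  obtain ⟨-, habd, hacd, hbcd⟩ := h.det2_sub_sub_ne_zero
  refine ⟨?_, ?_, ?_, ?_⟩ <;> rintro rfl
  · simp [det2] at habd
  · simp [det2] at habd
  · simp [det2] at hbcd
  · exact hacd (by rw [det2]; ring)

theorem fst_lt_fst_iff (h : IsUnitIsoscelesTrapezoid a b c d t) :
    a 0 < b 0 ↔ d 0 < c 0 := by
  rw [← sub_pos, ← sub_pos (a := c 0), h.apply_sub_eq 0, mul_pos_iff_of_pos_left h.pos]

theorem false_of_mem_closedBall (h : IsUnitIsoscelesTrapezoid a b c d t) {x : ℝ²} {r : ℝ}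
    (hr : r < 1 / 2) (ha : a ∈ closedBall x r) (hb : b ∈ closedBall x r)
    (hc : c ∈ closedBall x r) (hd : d ∈ closedBall x r) : False := by
  have hdiam {p q : ℝ²} (hp : p ∈ closedBall x r) (hq : q ∈ closedBall x r) :
      ‖q - p‖ ≤ 2 * r := by
    rw [← dist_eq_norm]
    exact dist_le_two_mul_of_mem_closedBall hq hp
  have hr0 : 0 ≤ 2 * r := by simpa using hdiam ha ha
  have hcd : t * |det2 (b - a) (d - a)| ≤ ‖c - d‖ * ‖d - a‖ := by
    have hcd_eq : det2 (c - d) (d - a) = t * det2 (b - a) (d - a) := by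
      simp only [det2, PiLp.sub_apply]
      rw [h.apply_sub_eq 0, h.apply_sub_eq 1]
      ring
    rw [← abs_of_pos h.pos, ← abs_mul, ← hcd_eq]
    exact abs_det2_le_norm_mul_norm _ _
  have : (2 : ℝ) ≤ 8 * r ^ 2 := calc
    2 = |det2 (b - a) (d - a)| + t * |det2 (b - a) (d - a)| := by
      linarith [h.one_add_mul_abs_det2]
    _ ≤ ‖b - a‖ * ‖d - a‖ + ‖c - d‖ * ‖d - a‖ :=
      add_le_add (abs_det2_le_norm_mul_norm _ _) hcd
    _ ≤ 2 * r * (2 * r) + 2 * r * (2 * r) :=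
      add_le_add (mul_le_mul (hdiam ha hb) (hdiam ha hd) (norm_nonneg _) hr0)
        (mul_le_mul (hdiam hd hc) (hdiam ha hd) (norm_nonneg _) hr0)
    _ = 8 * r ^ 2 := by ring
  nlinarith

end IsUnitIsoscelesTrapezoid

def axisPoints : Set ℝ² := {p | ∃ n : ℕ, 0 < n ∧ p = !₂[(n : ℝ), 0]}

theorem S₀_eq : S₀ = closedBall 0 (1 / 10) ∪ axisPoints := by
  ext p
  simp [S₀, axisPoints, WithLp.ext_iff]

theorem norm_toLp_pair_zero (x : ℝ) : ‖!₂[x, 0]‖ = |x| := by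
  simp [EuclideanSpace.norm_eq, Real.sqrt_sq_eq_abs]

theorem countable_axisPoints : axisPoints.Countable :=
  Set.Countable.mono (s₂ := Set.range fun n : ℕ => !₂[(n : ℝ), 0])
    (fun _ ⟨n, _, hp⟩ => ⟨n, hp.symm⟩) (Set.countable_range _)

theorem not_isBounded_axisPoints : ¬ Bornology.IsBounded axisPoints := by
  rw [isBounded_iff_forall_norm_le]
  rintro ⟨C, hC⟩
  obtain ⟨n, hn⟩ := exists_nat_gt (max C 0)
  have := hC _ ⟨n, by exact_mod_cast (le_max_right C 0).trans_lt hn, rfl⟩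
  rw [norm_toLp_pair_zero, Nat.abs_cast] at this
  linarith [le_max_left C 0]

variable {p q r s : ℝ²}

theorem det2_sub_sub_eq_zero_of_mem_axisPoints (hp : p ∈ axisPoints) (hq : q ∈ axisPoints)
    (hr : r ∈ axisPoints) : det2 (q - p) (r - p) = 0 := by
  obtain ⟨l, -, rfl⟩ := hp
  obtain ⟨m, -, rfl⟩ := hq
  obtain ⟨n, -, rfl⟩ := hr
  simp [det2]

theorem one_le_norm_of_mem_axisPoints (hp : p ∈ axisPoints) : 1 ≤ ‖p‖ := by
  obtain ⟨n, hn, rfl⟩ := hp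
  rw [norm_toLp_pair_zero, Nat.abs_cast]
  exact_mod_cast hn

theorem one_le_abs_norm_sub_norm (hp : p ∈ axisPoints) (hq : q ∈ axisPoints) (hpq : p ≠ q) :
    1 ≤ |‖p‖ - ‖q‖| := by
  obtain ⟨m, -, rfl⟩ := hp
  obtain ⟨n, -, rfl⟩ := hq
  rw [norm_toLp_pair_zero, norm_toLp_pair_zero, Nat.abs_cast, Nat.abs_cast]
  have hmn : (m : ℤ) - n ≠ 0 := by
    intro h
    exact hpq (by rw [show m = n by omega])
  exact_mod_cast Int.one_le_abs hmn

theorem fst_lt_fst_of_mem_axisPoints (hp : p ∈ closedBall 0 (1 / 10)) (hq : q ∈ axisPoints) :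
    p 0 < q 0 := by
  have hp0 : |p 0| ≤ 1 / 10 := (PiLp.norm_apply_le p 0).trans (mem_closedBall_zero_iff.1 hp)
  obtain ⟨n, hn, rfl⟩ := hq
  have hn' : (1 : ℝ) ≤ n := by exact_mod_cast hn
  simp only [Matrix.cons_val_zero]
  linarith [le_abs_self (p 0)]

theorem dist_lt_dist_of_mem_axisPoints (hp : p ∈ closedBall 0 (1 / 10))
    (hq : q ∈ closedBall 0 (1 / 10)) (hr : r ∈ closedBall 0 (1 / 10)) (hs : s ∈ axisPoints) :
    dist p q < dist r s := by
  rw [dist_comm r s]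
  linarith [dist_le_two_mul_of_mem_closedBall hp hq, mem_closedBall_zero_iff.1 hr,
    one_le_norm_of_mem_axisPoints hs, abs_le.1 (abs_dist_sub_norm_le s r)]

theorem dist_lt_dist_of_mem_axisPoints_of_ne (hp : p ∈ closedBall 0 (1 / 10))
    (hq : q ∈ closedBall 0 (1 / 10)) (hr : r ∈ axisPoints) (hs : s ∈ axisPoints) (hrs : r ≠ s) :
    dist p q < dist r s := by
  rw [dist_eq_norm r s]
  linarith [dist_le_two_mul_of_mem_closedBall hp hq, one_le_abs_norm_sub_norm hr hs hrs,
    abs_norm_sub_norm_le r s]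

theorem eq_of_dist_eq_of_mem_axisPoints (hr : r ∈ axisPoints) (hs : s ∈ axisPoints)
    (hp : p ∈ closedBall 0 (1 / 10)) (hq : q ∈ closedBall 0 (1 / 10)) (h : dist r p = dist s q) :
    r = s := by
  by_contra hrs
  have hr' := abs_le.1 ((abs_dist_sub_norm_le r p).trans (mem_closedBall_zero_iff.1 hp))
  have hs' := abs_le.1 ((abs_dist_sub_norm_le s q).trans (mem_closedBall_zero_iff.1 hq))
  have : |‖r‖ - ‖s‖| ≤ 1 / 5 := abs_le.2 ⟨by linarith, by linarith⟩
  linarith [one_le_abs_norm_sub_norm hr hs hrs]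

theorem IsUnitIsoscelesTrapezoid.not_subset_S₀ {a b c d : ℝ²} {t : ℝ}
    (h : IsUnitIsoscelesTrapezoid a b c d t) : ¬ {a, b, c, d} ⊆ S₀ := by
  intro hsub
  simp only [Set.insert_subset_iff, Set.singleton_subset_iff, S₀_eq, Set.mem_union] at hsub
  obtain ⟨ha | ha, hb | hb, hc | hc, hd | hd⟩ := hsub
  · exact h.false_of_mem_closedBall (by norm_num) ha hb hc hd
  · exact (dist_lt_dist_of_mem_axisPoints hb hc ha hd).ne' h.dist_eq
  · exact (dist_lt_dist_of_mem_axisPoints ha hd hb hc).ne h.dist_eq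
  · exact h.ne.2.2.2 <|
      eq_of_dist_eq_of_mem_axisPoints hc hd hb ha (by rw [dist_comm c, dist_comm d, h.dist_eq])
  · exact (dist_lt_dist_of_mem_axisPoints ha hd hc hb).ne (h.dist_eq.trans (dist_comm b c))
  · exact (h.fst_lt_fst_iff.1 (fst_lt_fst_of_mem_axisPoints ha hb)).asymm
      (fst_lt_fst_of_mem_axisPoints hc hd)
  · exact (dist_lt_dist_of_mem_axisPoints_of_ne ha hd hb hc h.ne.2.2.1).ne h.dist_eq
  · exact h.det2_sub_sub_ne_zero.2.2.2 (det2_sub_sub_eq_zero_of_mem_axisPoints hb hc hd)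
  · exact (dist_lt_dist_of_mem_axisPoints hb hc hd ha).ne (h.dist_eq.symm.trans (dist_comm a d))
  · exact (dist_lt_dist_of_mem_axisPoints_of_ne hb hc ha hd h.ne.2.1).ne' h.dist_eq
  · exact (h.fst_lt_fst_iff.2 (fst_lt_fst_of_mem_axisPoints hd hc)).asymm
      (fst_lt_fst_of_mem_axisPoints hb ha)
  · exact h.det2_sub_sub_ne_zero.2.2.1 (det2_sub_sub_eq_zero_of_mem_axisPoints ha hc hd)
  · exact h.ne.1 (eq_of_dist_eq_of_mem_axisPoints ha hb hd hc h.dist_eq)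
  · exact h.det2_sub_sub_ne_zero.2.1 (det2_sub_sub_eq_zero_of_mem_axisPoints ha hb hd)
  · exact h.det2_sub_sub_ne_zero.1 (det2_sub_sub_eq_zero_of_mem_axisPoints ha hb hc)
  · exact h.det2_sub_sub_ne_zero.2.1 (det2_sub_sub_eq_zero_of_mem_axisPoints ha hb hd)

/-- `S₀` is an unbounded measurable set of positive finite Lebesgue measure containing no four
vertices of an isosceles trapezoid of area `1`; hence the infinite-measure hypothesis in the
trapezoid theorem cannot be weakened to unboundedness with positive measure. -/
theorem counterexample_trapezoid :
    ¬ Bornology.IsBounded S₀ ∧ MeasurableSet S₀ ∧ 0 < volume S₀ ∧ volume S₀ < ⊤ ∧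
    ¬ ∃ (a b c d : EuclideanSpace ℝ (Fin 2)) (t : ℝ),
        a ∈ S₀ ∧ b ∈ S₀ ∧ c ∈ S₀ ∧ d ∈ S₀ ∧
        0 < t ∧ t ≠ 1 ∧ c - d = t • (b - a) ∧ b - a ≠ 0 ∧
        dist a d = dist b c ∧
        (1 / 2) * |det2 (b - a) (d - a) + det2 (c - b) (d - b)| = 1 := by
  refine ⟨?_, ?_, ?_, ?_, ?_⟩
  · rw [S₀_eq]
    exact fun hbdd => not_isBounded_axisPoints (hbdd.subset Set.subset_union_right)
  · rw [S₀_eq]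
    exact measurableSet_closedBall.union countable_axisPoints.measurableSet
  · rw [S₀_eq]
    exact (measure_closedBall_pos volume 0 (by norm_num)).trans_le
      (measure_mono Set.subset_union_left)
  · rw [S₀_eq]
    exact measure_union_lt_top measure_closedBall_lt_top
      ((countable_axisPoints.measure_zero volume).trans_lt ENNReal.zero_lt_top)
  · rintro ⟨a, b, c, d, t, ha, hb, hc, hd, ht, -, hcd, -, hdist, harea⟩
    exact IsUnitIsoscelesTrapezoid.not_subset_S₀ ⟨ht, hcd, hdist, harea⟩
      (by simp [Set.insert_subset_iff, *])
end

section
/- Let ε ∈ (0,1), R > 100, and let A ∈ ℝ² with ‖A‖ = d > 100/ε + ε. Let ψ(r) = arcsin((R²/(R² − 1))·(2/r²)) and f(r·cos θ, r·sin θ) = (r·cos(θ + ψ(r)), r·sin(θ + ψ(r))). Then for every p ∈ B(A, ε/2), ψ(‖p‖) is defined, dist(p, f(p)) < ε/2, and f(p) ∈ B(A, ε); moreover f preserves Lebesgue measure on {p : ‖p‖ > 100}: for every measurable E ⊆ {p : ‖p‖ > 100}, μ(f(E)) = μ(E). -/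
/-!
On `{‖p‖ > 100}` the map `f` is the radial rotation `p ↦ rot(ψ ‖p‖) p`. Its derivative at `p` is
`rot(ψ ‖p‖) ∘ (id + ℓ ⊗ J p)` with `ℓ = ψ'(‖p‖) ‖p‖⁻¹ ⟪p, ·⟫`, whose determinant is
`1 + ℓ (J p) = 1` because `J p ⟂ p`. Since a radial rotation preserves norms it is injective, so
the change of variables formula shows that it preserves Lebesgue measure.

For `p ∈ B(A, ε/2)` we have `‖p‖ > 100/ε`, and a rotation by `θ` with `cos θ ≥ 0` moves `p` by at
most `√2 |sin θ| ‖p‖`; here `sin ψ(‖p‖) = 2K/‖p‖²` with `K = R²/(R² - 1) ≤ 2`, so `p` moves by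
less than `3K/‖p‖ < ε/2`.
-/

open MeasureTheory Metric Real
open scoped EuclideanSpace

theorem LinearMap.det_id_add_smulRight {R M : Type*} [CommRing R] [AddCommGroup M] [Module R M]
    [Module.Free R M] [Module.Finite R M] (l : M →ₗ[R] R) (v : M) :
    LinearMap.det (LinearMap.id + l.smulRight v) = 1 + l v := by
  let b := Module.Free.chooseBasis R M
  have hmat : LinearMap.toMatrix b b (LinearMap.id + l.smulRight v) =
      1 + Matrix.replicateCol Unit (b.repr v) * Matrix.replicateRow Unit (fun j => l (b j)) := by
    ext i j
    simp [LinearMap.toMatrix_apply, Matrix.one_apply, Matrix.mul_apply, Finsupp.single_apply,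
      eq_comm, mul_comm]
  rw [← LinearMap.det_toMatrix b, hmat, Matrix.det_one_add_replicateCol_mul_replicateRow]
  conv_rhs => rw [← b.sum_repr v, map_sum]
  simp [dotProduct, mul_comm]

theorem hasFDerivAt_norm_of_ne_zero {F : Type*} [NormedAddCommGroup F] [InnerProductSpace ℝ F]
    {x : F} (hx : x ≠ 0) : HasFDerivAt (‖·‖) (‖x‖⁻¹ • innerSL ℝ x) x := by
  have h := (hasDerivAt_sqrt (by positivity : ‖x‖ ^ 2 ≠ 0)).comp_hasFDerivAt x
    (hasStrictFDerivAt_norm_sq x).hasFDerivAt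
  rw [show (‖·‖ : F → ℝ) = (√·) ∘ (‖·‖ ^ 2) from funext fun y => (sqrt_sq (norm_nonneg y)).symm]
  refine h.congr_fderiv ?_
  rw [sqrt_sq (norm_nonneg x)]
  ext y
  simp
  field_simp

namespace Orientation

variable {V : Type*} [NormedAddCommGroup V] [InnerProductSpace ℝ V]
  [Fact (Module.finrank ℝ V = 2)] (o : Orientation ℝ V (Fin 2))

attribute [local instance] FiniteDimensional.of_fact_finrank_eq_two

local notation "J" => o.rightAngleRotation

theorem hasFDerivAt_rotation_apply {φ : V → ℝ} {φ' : V →L[ℝ] ℝ} {x : V}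
    (hφ : HasFDerivAt φ φ' x) :
    HasFDerivAt (fun y => o.rotation (φ y) y)
      ((o.rotation (φ x)).toContinuousLinearEquiv.toContinuousLinearMap ∘L
        (ContinuousLinearMap.id ℝ V + φ'.smulRight (J x))) x := by
  have hcos := (hasDerivAt_cos (φ x)).comp_hasFDerivAt x hφ
  have hsin := (hasDerivAt_sin (φ x)).comp_hasFDerivAt x hφ
  have h := (hcos.smul (hasFDerivAt_id x)).add
    (hsin.smul (J).toContinuousLinearEquiv.toContinuousLinearMap.hasFDerivAt)
  simp only [rotation_apply, Real.Angle.cos_coe, Real.Angle.sin_coe]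
  refine h.congr_fderiv ?_
  ext v
  simp [rotation_apply]
  module

theorem det_rotation_comp_id_add_smulRight (θ : Real.Angle) (l : V →L[ℝ] ℝ) (w : V) :
    ((o.rotation θ).toContinuousLinearEquiv.toContinuousLinearMap ∘L
      (ContinuousLinearMap.id ℝ V + l.smulRight w)).det = 1 + l w := by
  show LinearMap.det ((o.rotation θ).toLinearMap ∘ₗ
    (LinearMap.id + (l : V →ₗ[ℝ] ℝ).smulRight w)) = _
  rw [LinearMap.det_comp, o.det_rotation, LinearMap.det_id_add_smulRight, one_mul]
  rfl

theorem dist_rotation_self_sq_le (x : V) {θ : ℝ} (hθ : 0 ≤ cos θ) :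
    dist (o.rotation θ x) x ^ 2 ≤ 2 * (sin θ * ‖x‖) ^ 2 := by
  have h : dist (o.rotation θ x) x ^ 2 = 2 * (1 - cos θ) * ‖x‖ ^ 2 := by
    rw [dist_eq_norm, norm_sub_sq_real, LinearIsometryEquiv.norm_map]
    simp [rotation_apply, inner_add_left, inner_smul_left]
    ring
  rw [h]
  nlinarith [sin_sq_add_cos_sq θ, cos_le_one θ, sq_nonneg ‖x‖]

noncomputable def radialRotation (ψ : ℝ → ℝ) (x : V) : V := o.rotation (ψ ‖x‖) x

noncomputable def radialRotationDeriv (ψ : ℝ → ℝ) (x : V) : V →L[ℝ] V :=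
  (o.rotation (ψ ‖x‖)).toContinuousLinearEquiv.toContinuousLinearMap ∘L
    (ContinuousLinearMap.id ℝ V + ((deriv ψ ‖x‖ * ‖x‖⁻¹) • innerSL ℝ x).smulRight (J x))

@[simp]
theorem norm_radialRotation (ψ : ℝ → ℝ) (x : V) : ‖o.radialRotation ψ x‖ = ‖x‖ :=
  (o.rotation _).norm_map x

theorem radialRotation_injective (ψ : ℝ → ℝ) : Function.Injective (o.radialRotation ψ) := by
  intro x y hxy
  have hnorm : ‖x‖ = ‖y‖ := by
    rw [← o.norm_radialRotation ψ x, ← o.norm_radialRotation ψ y, hxy]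
  unfold radialRotation at hxy
  rw [hnorm] at hxy
  exact (o.rotation _).injective hxy

theorem hasFDerivAt_radialRotation {ψ : ℝ → ℝ} {x : V} (hx : x ≠ 0)
    (hψ : DifferentiableAt ℝ ψ ‖x‖) :
    HasFDerivAt (o.radialRotation ψ) (o.radialRotationDeriv ψ x) x := by
  have h := hψ.hasDerivAt.comp_hasFDerivAt x (hasFDerivAt_norm_of_ne_zero hx)
  rw [smul_smul] at h
  exact o.hasFDerivAt_rotation_apply h

theorem det_radialRotationDeriv (ψ : ℝ → ℝ) (x : V) : (o.radialRotationDeriv ψ x).det = 1 := by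
  rw [radialRotationDeriv, det_rotation_comp_id_add_smulRight]
  simp

theorem addHaar_image_radialRotation [MeasurableSpace V] [BorelSpace V] (μ : Measure V)
    [μ.IsAddHaarMeasure] {ψ : ℝ → ℝ} {s : Set V} (hs : MeasurableSet s) (h0 : ∀ x ∈ s, x ≠ 0)
    (hψ : ∀ x ∈ s, DifferentiableAt ℝ ψ ‖x‖) : μ (o.radialRotation ψ '' s) = μ s := by
  rw [← lintegral_abs_det_fderiv_eq_addHaar_image μ hs
    (fun x hx => (o.hasFDerivAt_radialRotation (h0 x hx) (hψ x hx)).hasFDerivWithinAt)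
    (o.radialRotation_injective ψ).injOn]
  simp only [det_radialRotationDeriv, abs_one, ENNReal.ofReal_one, setLIntegral_one]

end Orientation

noncomputable def rotationAngle (K r : ℝ) : ℝ := arcsin (K * (2 / r ^ 2))

theorem differentiableAt_rotationAngle {K r : ℝ} (hK : 0 ≤ K) (hr : 2 * K < r ^ 2) :
    DifferentiableAt ℝ (rotationAngle K) r := by
  have hr0 : r ≠ 0 := by rintro rfl; linarith
  have hlt : K * (2 / r ^ 2) < 1 := by
    rw [mul_div_assoc', div_lt_one (by positivity)]; linarith
  have hpos : 0 ≤ K * (2 / r ^ 2) := by positivity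
  exact (differentiableAt_arcsin.2 ⟨by linarith, hlt.ne⟩).comp r
    (by fun_prop (disch := positivity))

theorem sin_rotationAngle {K r : ℝ} (hK : 0 ≤ K) (hr : 2 * K ≤ r ^ 2) :
    sin (rotationAngle K r) = K * (2 / r ^ 2) := by
  have hpos : 0 ≤ K * (2 / r ^ 2) := by positivity
  refine sin_arcsin (by linarith) ?_
  rcases (sq_nonneg r).eq_or_lt with hr0 | hr0
  · rw [← hr0]; simp
  · rw [mul_div_assoc', div_le_one hr0]; linarith

theorem Orientation.dist_radialRotation_rotationAngle_le {V : Type*} [NormedAddCommGroup V]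
    [InnerProductSpace ℝ V] [Fact (Module.finrank ℝ V = 2)] (o : Orientation ℝ V (Fin 2))
    {K : ℝ} {x : V} (hK : 0 ≤ K) (hx : 2 * K ≤ ‖x‖ ^ 2) :
    dist (o.radialRotation (rotationAngle K) x) x ≤ 3 * K / ‖x‖ := by
  rcases (norm_nonneg x).eq_or_lt with hx0 | hx0
  · obtain rfl : x = 0 := norm_eq_zero.1 hx0.symm
    simp [radialRotation]
  have hsq := o.dist_rotation_self_sq_le x (cos_arcsin_nonneg (K * (2 / ‖x‖ ^ 2)))
  rw [← rotationAngle, sin_rotationAngle hK hx] at hsq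
  refine le_of_sq_le_sq ?_ (by positivity)
  calc dist (o.radialRotation (rotationAngle K) x) x ^ 2
      ≤ 2 * (K * (2 / ‖x‖ ^ 2) * ‖x‖) ^ 2 := hsq
    _ = 8 * K ^ 2 / ‖x‖ ^ 2 := by field_simp; ring
    _ ≤ (3 * K / ‖x‖) ^ 2 := by rw [div_pow]; gcongr; nlinarith

namespace EuclideanSpace

attribute [local instance] Complex.finrank_real_complex_fact

/-- The counterclockwise orientation of the plane, transported from `ℂ` by `x + i y ↦ (x, y)`. -/
noncomputable def complexOrientation : Orientation ℝ (EuclideanSpace ℝ (Fin 2)) (Fin 2) :=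
  Complex.orientation.map (Fin 2) Complex.orthonormalBasisOneI.repr.toLinearEquiv

theorem complexOrientation_rotation (θ a b : ℝ) :
    complexOrientation.rotation θ (WithLp.toLp 2 ![a, b]) =
      WithLp.toLp 2 ![a * cos θ - b * sin θ, a * sin θ + b * cos θ] := by
  rw [complexOrientation, Orientation.rotation_map, Complex.rotation]
  ext i
  fin_cases i <;> simp [Complex.orthonormalBasisOneI_repr_symm_apply] <;> ring

theorem exists_eq_norm_mul_cos_sin (p : EuclideanSpace ℝ (Fin 2)) :
    ∃ θ : ℝ, p = WithLp.toLp 2 ![‖p‖ * cos θ, ‖p‖ * sin θ] := by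
  set z := Complex.orthonormalBasisOneI.repr.symm p
  refine ⟨z.arg, ?_⟩
  have hz : ‖z‖ = ‖p‖ := LinearIsometryEquiv.norm_map _ p
  rw [← hz, Complex.norm_mul_cos_arg, Complex.norm_mul_sin_arg]
  ext i
  fin_cases i <;> simp [z, Complex.orthonormalBasisOneI_repr_symm_apply]

theorem eqOn_radialRotation {f : EuclideanSpace ℝ (Fin 2) → EuclideanSpace ℝ (Fin 2)}
    {ψ : ℝ → ℝ} {a : ℝ}
    (hf : ∀ r θ : ℝ, a < r → f (WithLp.toLp 2 ![r * cos θ, r * sin θ]) =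
      WithLp.toLp 2 ![r * cos (θ + ψ r), r * sin (θ + ψ r)]) :
    Set.EqOn f (complexOrientation.radialRotation ψ) {p | a < ‖p‖} := by
  intro p hp
  obtain ⟨θ, hθ⟩ := exists_eq_norm_mul_cos_sin p
  calc f p = f (WithLp.toLp 2 ![‖p‖ * cos θ, ‖p‖ * sin θ]) := congrArg f hθ
    _ = WithLp.toLp 2 ![‖p‖ * cos (θ + ψ ‖p‖), ‖p‖ * sin (θ + ψ ‖p‖)] := hf _ _ hp
    _ = complexOrientation.rotation (ψ ‖p‖) (WithLp.toLp 2 ![‖p‖ * cos θ, ‖p‖ * sin θ]) := by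
      rw [complexOrientation_rotation, cos_add, sin_add]
      congr 3 <;> ring
    _ = complexOrientation.radialRotation ψ p := by rw [← hθ]; rfl

end EuclideanSpace

/-- For `ε ∈ (0,1)`, `R > 100`, `‖A‖ = d > 100/ε + ε`, and `f` the rotation of the point of
polar coordinates `(r, θ)` to `(r, θ + ψ(r))` where `ψ(r) = arcsin((R²/(R²−1))·(2/r²))`:
every `p ∈ B(A, ε/2)` satisfies `(R²/(R²−1))·(2/‖p‖²) < 1` (so `ψ(‖p‖)` is defined),
`dist p (f p) < ε/2`, `f p ∈ B(A, ε)`, and `f` preserves Lebesgue measure on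
`{p : ‖p‖ > 100}`. -/
theorem rotation_psi_maps_ball_and_preserves_measure (ε R : ℝ) (hε0 : 0 < ε) (hε1 : ε < 1)
    (hR : 100 < R) (A : EuclideanSpace ℝ (Fin 2)) (d : ℝ) (hd : ‖A‖ = d)
    (hdlarge : 100 / ε + ε < d)
    (f : EuclideanSpace ℝ (Fin 2) → EuclideanSpace ℝ (Fin 2))
    (hf : ∀ r θ : ℝ, 100 < r →
      f (WithLp.toLp 2 ![r * Real.cos θ, r * Real.sin θ]) =
        WithLp.toLp 2 ![r * Real.cos (θ + Real.arcsin (R ^ 2 / (R ^ 2 - 1) * (2 / r ^ 2))),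
          r * Real.sin (θ + Real.arcsin (R ^ 2 / (R ^ 2 - 1) * (2 / r ^ 2)))]) :
    (∀ p ∈ ball A (ε / 2),
      R ^ 2 / (R ^ 2 - 1) * (2 / ‖p‖ ^ 2) < 1 ∧ dist p (f p) < ε / 2 ∧ f p ∈ ball A ε) ∧
    ∀ E : Set (EuclideanSpace ℝ (Fin 2)),
      E ⊆ {p : EuclideanSpace ℝ (Fin 2) | 100 < ‖p‖} → MeasurableSet E →
      volume (f '' E) = volume E := by
  set K := R ^ 2 / (R ^ 2 - 1)
  have hK0 : 0 ≤ K := div_nonneg (sq_nonneg R) (by nlinarith)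
  have hK2 : K ≤ 2 := by rw [div_le_iff₀ (by nlinarith)]; nlinarith
  have hfo : Set.EqOn f (EuclideanSpace.complexOrientation.radialRotation (rotationAngle K))
      {p | 100 < ‖p‖} := EuclideanSpace.eqOn_radialRotation hf
  have hKlt {p : EuclideanSpace ℝ (Fin 2)} (hp : 100 < ‖p‖) : 2 * K < ‖p‖ ^ 2 := by nlinarith
  refine ⟨fun p hp => ?_, fun E hE hEm => ?_⟩
  · have hεp : 100 < ε * ‖p‖ := by
      have := norm_sub_norm_le A p
      rw [← dist_eq_norm, dist_comm, hd] at this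
      rw [← div_lt_iff₀' hε0]; linarith [mem_ball.1 hp]
    have h100 : 100 < ‖p‖ := by nlinarith
    have hdist : dist p (f p) < ε / 2 := calc
      dist p (f p)
          = dist (EuclideanSpace.complexOrientation.radialRotation (rotationAngle K) p) p := by
        rw [dist_comm, hfo h100]
      _ ≤ 3 * K / ‖p‖ :=
        EuclideanSpace.complexOrientation.dist_radialRotation_rotationAngle_le hK0 (hKlt h100).le
      _ < ε / 2 := by rw [div_lt_iff₀ (by positivity)]; nlinarith
    refine ⟨by rw [mul_div_assoc', div_lt_one (by positivity), mul_comm]; exact hKlt h100,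
      hdist, ?_⟩
    calc dist (f p) A ≤ dist (f p) p + dist p A := dist_triangle _ _ _
      _ < ε := by rw [dist_comm]; linarith [mem_ball.1 hp]
  · rw [Set.image_congr (hfo.mono hE)]
    exact EuclideanSpace.complexOrientation.addHaar_image_radialRotation volume hEm
      (fun x hx => norm_pos_iff.1 (by linarith [show 100 < ‖x‖ from hE hx]))
      (fun x hx => differentiableAt_rotationAngle hK0 (hKlt (hE hx)))
end
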